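/- arXiv:1704.08356 — 3 statements merged into one kernel-verified Lean document; each statement's English description precedes it below -/
import Mathlib

section
/- (Theorem 4.1, matrix form at a fixed frequency) Suppose nodes i and j (i ≠ j) are strict two-hop neighbors of the grid graph: b i j = 0, but there exists a node k with b k i > 0 and b k j > 0. Then the Wiener filter coefficient W j i = −(Φ⁻¹) j i / (Φ⁻¹) j j is a strictly negative real number, i.e. Im(W j i) = 0 and Re(W j i) < 0; equivalently, the phase of W j i is −π (mod 2π) at the frequency ω. -/
open Matrix Complex

/-- The characteristic polynomial term `S_j(z)` of the discretized swing equation,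
evaluated at `z = e^{iω}`. -/
noncomputable def gridS (N : ℕ) (ω : ℝ) (b : Fin N → Fin N → ℝ) (ts : ℝ)
    (M D : Fin N → ℝ) (j : Fin N) : ℂ :=
  ((M j / ts ^ 2 : ℝ) : ℂ) * (Complex.exp (Complex.I * ω) - 1) ^ 2 +
    ((D j / ts : ℝ) : ℂ) * (Complex.exp (Complex.I * ω) - 1) + ((∑ i, b i j : ℝ) : ℂ)

/-- The transfer-function matrix `H` of the swing-equation linear dynamic graph:
`H j i = b j i / S j` for `i ≠ j`, `H j j = 0`. -/
noncomputable def gridH (N : ℕ) (ω : ℝ) (b : Fin N → Fin N → ℝ) (ts : ℝ)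
    (M D : Fin N → ℝ) : Matrix (Fin N) (Fin N) ℂ :=
  Matrix.of fun j i => if i = j then 0 else ((b j i : ℝ) : ℂ) / gridS N ω b ts M D j

/-- The power spectral density matrix `Φ = (I − H)⁻¹ diag(d) ((I − H)⁻¹)ᴴ`. -/
noncomputable def gridPhi (N : ℕ) (ω : ℝ) (b : Fin N → Fin N → ℝ) (ts : ℝ)
    (M D : Fin N → ℝ) (d : Fin N → ℝ) : Matrix (Fin N) (Fin N) ℂ :=
  (1 - gridH N ω b ts M D)⁻¹ * Matrix.diagonal (fun k => ((d k : ℝ) : ℂ)) *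
    ((1 - gridH N ω b ts M D)⁻¹)ᴴ

/-! Since `Φ = A⁻¹ diag(d) A⁻¹ᴴ` with `A = I - H`, its inverse is the weighted Gram matrix
`Aᴴ diag(d)⁻¹ A`, whose `(j, i)` entry is `∑ₖ conj (A k j) A k i / d k`. Off the diagonal
`A k l = -b k l / S k`, and the terms `k = i`, `k = j` vanish because `b i j = b j i = 0`; every
other term is the nonnegative real `b k j b k i / (d k |S k|²)`, positive at a common neighbour.
The `(j, j)` entry `∑ₖ |A k j|² / d k ≥ 1 / d j` is positive, so `W j i` is minus a positive
ratio of reals. -/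

namespace Matrix

variable {n : Type*} [Fintype n] [DecidableEq n]

theorem isUnit_nonsing_inv_mul_mul_conjTranspose {R : Type*} [CommRing R] [StarRing R]
    {A B : Matrix n n R} (hA : IsUnit A) (hB : IsUnit B) : IsUnit (A⁻¹ * B * A⁻¹ᴴ) :=
  have hA' : IsUnit A⁻¹ := isUnit_nonsing_inv_iff.2 hA
  (hA'.mul hB).mul ((isUnit_conjTranspose _).2 hA')

theorem inv_nonsing_inv_mul_mul_conjTranspose {R : Type*} [CommRing R] [StarRing R]
    {A : Matrix n n R} (hA : IsUnit A) (B : Matrix n n R) :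
    (A⁻¹ * B * A⁻¹ᴴ)⁻¹ = Aᴴ * B⁻¹ * A := by
  have hdet : IsUnit A.det := (isUnit_iff_isUnit_det A).1 hA
  have hdet' : IsUnit Aᴴ.det := (isUnit_iff_isUnit_det _).1 ((isUnit_conjTranspose _).2 hA)
  rw [mul_inv_rev, mul_inv_rev, conjTranspose_nonsing_inv, nonsing_inv_nonsing_inv _ hdet',
    nonsing_inv_nonsing_inv _ hdet, Matrix.mul_assoc]

theorem inv_diagonal_of_ne_zero {K : Type*} [Field K] {v : n → K} (hv : ∀ k, v k ≠ 0) :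
    (diagonal v)⁻¹ = diagonal fun k => (v k)⁻¹ :=
  inv_eq_left_inv <| by
    rw [diagonal_mul_diagonal, ← diagonal_one]
    exact congrArg diagonal (funext fun k => inv_mul_cancel₀ (hv k))

theorem conjTranspose_mul_diagonal_mul_apply {R : Type*} [Semiring R] [Star R]
    (A : Matrix n n R) (w : n → R) (l m : n) :
    (Aᴴ * diagonal w * A) l m = ∑ k, star (A k l) * w k * A k m := by
  simp only [mul_apply (M := Aᴴ * diagonal w), mul_diagonal, conjTranspose_apply]

theorem conjTranspose_mul_diagonal_ofReal_mul_apply_self (A : Matrix n n ℂ) (w : n → ℝ) (j : n) :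
    (Aᴴ * diagonal (fun k => (w k : ℂ)) * A) j j = ((∑ k, w k * normSq (A k j) : ℝ) : ℂ) := by
  rw [conjTranspose_mul_diagonal_mul_apply, ofReal_sum]
  refine Finset.sum_congr rfl fun k _ => ?_
  rw [ofReal_mul, ← mul_conj, star_def]
  ring

end Matrix

section Grid

variable {N : ℕ} {ω : ℝ} {b : Fin N → Fin N → ℝ} {ts : ℝ} {M D : Fin N → ℝ}

theorem one_sub_gridH_apply_self (k : Fin N) : (1 - gridH N ω b ts M D) k k = 1 := by
  simp [gridH]

theorem one_sub_gridH_apply_of_ne {k l : Fin N} (hkl : k ≠ l) :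
    (1 - gridH N ω b ts M D) k l = -((b k l : ℂ) / gridS N ω b ts M D k) := by
  simp [gridH, one_apply_ne hkl, Ne.symm hkl]

theorem gridPhi_isUnit (d : Fin N → ℝ) (hd : ∀ k, d k ≠ 0)
    (hinv : IsUnit (1 - gridH N ω b ts M D)) : IsUnit (gridPhi N ω b ts M D d) :=
  isUnit_nonsing_inv_mul_mul_conjTranspose hinv
    (isUnit_diagonal.2 (Pi.isUnit_iff.2 fun k => (ofReal_ne_zero.2 (hd k)).isUnit))

theorem gridPhi_inv (d : Fin N → ℝ) (hd : ∀ k, d k ≠ 0)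
    (hinv : IsUnit (1 - gridH N ω b ts M D)) :
    (gridPhi N ω b ts M D d)⁻¹ = (1 - gridH N ω b ts M D)ᴴ *
      diagonal (fun k => (((d k)⁻¹ : ℝ) : ℂ)) * (1 - gridH N ω b ts M D) := by
  rw [gridPhi, inv_nonsing_inv_mul_mul_conjTranspose hinv,
    inv_diagonal_of_ne_zero fun k => ofReal_ne_zero.2 (hd k)]
  simp only [ofReal_inv]

theorem star_one_sub_gridH_mul_mul_one_sub_gridH {i j : Fin N} (hij : i ≠ j) (hbij : b i j = 0)
    (hbji : b j i = 0) (c : ℝ) (k : Fin N) :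
    star ((1 - gridH N ω b ts M D) k j) * (c : ℂ) * (1 - gridH N ω b ts M D) k i =
      ((c * (b k j * b k i / normSq (gridS N ω b ts M D k)) : ℝ) : ℂ) := by
  by_cases hki : k = i
  · subst hki
    simp [one_sub_gridH_apply_of_ne hij, hbij]
  by_cases hkj : k = j
  · subst hkj
    simp [one_sub_gridH_apply_of_ne (Ne.symm hij), hbji]
  rw [one_sub_gridH_apply_of_ne hkj, one_sub_gridH_apply_of_ne hki, star_def, map_neg, map_div₀,
    conj_ofReal]
  push_cast
  rw [← mul_conj]
  ring

theorem gridPhi_inv_apply_of_nonadjacent {d : Fin N → ℝ} (hd : ∀ k, d k ≠ 0)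
    (hinv : IsUnit (1 - gridH N ω b ts M D)) {i j : Fin N} (hij : i ≠ j) (hbij : b i j = 0)
    (hbji : b j i = 0) :
    (gridPhi N ω b ts M D d)⁻¹ j i =
      ((∑ k, (d k)⁻¹ * (b k j * b k i / normSq (gridS N ω b ts M D k)) : ℝ) : ℂ) := by
  rw [gridPhi_inv d hd hinv, conjTranspose_mul_diagonal_mul_apply, ofReal_sum]
  exact Finset.sum_congr rfl fun k _ => star_one_sub_gridH_mul_mul_one_sub_gridH hij hbij hbji _ k

theorem gridPhi_inv_apply_self {d : Fin N → ℝ} (hd : ∀ k, d k ≠ 0)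
    (hinv : IsUnit (1 - gridH N ω b ts M D)) (j : Fin N) :
    (gridPhi N ω b ts M D d)⁻¹ j j =
      ((∑ k, (d k)⁻¹ * normSq ((1 - gridH N ω b ts M D) k j) : ℝ) : ℂ) := by
  rw [gridPhi_inv d hd hinv, conjTranspose_mul_diagonal_ofReal_mul_apply_self]

end Grid

theorem wiener_coeff_spurious_edge_negative_real_general
    (N : ℕ) (ω : ℝ) (b : Fin N → Fin N → ℝ)
    (hsym : ∀ i j, b i j = b j i) (hnonneg : ∀ i j, 0 ≤ b i j)
    (ts : ℝ) (M D : Fin N → ℝ)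
    (hS : ∀ j, gridS N ω b ts M D j ≠ 0)
    (d : Fin N → ℝ) (hd : ∀ j, 0 < d j)
    (hinv : IsUnit (1 - gridH N ω b ts M D))
    (i j : Fin N) (hij : i ≠ j) (hbij : b i j = 0)
    (hk : ∃ k, 0 < b k i ∧ 0 < b k j) :
    IsUnit (gridPhi N ω b ts M D d) ∧
      (-(((gridPhi N ω b ts M D d)⁻¹) j i) / ((gridPhi N ω b ts M D d)⁻¹) j j).im = 0 ∧
      (-(((gridPhi N ω b ts M D d)⁻¹) j i) / ((gridPhi N ω b ts M D d)⁻¹) j j).re < 0 := by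
  have hd₀ : ∀ k, d k ≠ 0 := fun k => (hd k).ne'
  have hbji : b j i = 0 := (hsym j i).trans hbij
  obtain ⟨k₀, hk₀i, hk₀j⟩ := hk
  have h_ji : 0 < ∑ k, (d k)⁻¹ * (b k j * b k i / normSq (gridS N ω b ts M D k)) := by
    refine Finset.sum_pos' (fun l _ => ?_) ⟨k₀, Finset.mem_univ k₀, ?_⟩
    · exact mul_nonneg (inv_nonneg.2 (hd l).le)
        (div_nonneg (mul_nonneg (hnonneg l j) (hnonneg l i)) (normSq_nonneg _))
    · exact mul_pos (inv_pos.2 (hd k₀)) (div_pos (mul_pos hk₀j hk₀i) (normSq_pos.2 (hS k₀)))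
  have h_jj : 0 < ∑ k, (d k)⁻¹ * normSq ((1 - gridH N ω b ts M D) k j) := by
    refine Finset.sum_pos' (fun l _ => ?_) ⟨j, Finset.mem_univ j, ?_⟩
    · exact mul_nonneg (inv_nonneg.2 (hd l).le) (normSq_nonneg _)
    · rw [one_sub_gridH_apply_self, normSq_one, mul_one]
      exact inv_pos.2 (hd j)
  rw [gridPhi_inv_apply_of_nonadjacent hd₀ hinv hij hbij hbji, gridPhi_inv_apply_self hd₀ hinv,
    ← ofReal_neg, ← ofReal_div, ofReal_im, ofReal_re]
  exact ⟨gridPhi_isUnit d hd₀ hinv, rfl, div_neg_of_neg_of_pos (neg_neg_of_pos h_ji) h_jj⟩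

/-- **Theorem 4.1** (matrix form at a fixed frequency): if `i` and `j` are strict
two-hop neighbors of the grid graph, then the Wiener filter coefficient
`W j i = −(Φ⁻¹) j i / (Φ⁻¹) j j` is a strictly negative real number, i.e. its
phase is `−π` (mod `2π`). -/
theorem wiener_coeff_spurious_edge_negative_real
    (N : ℕ) (hN : 1 ≤ N) (ω : ℝ) (b : Fin N → Fin N → ℝ)
    (hsym : ∀ i j, b i j = b j i) (hnonneg : ∀ i j, 0 ≤ b i j)
    (hhollow : ∀ i, b i i = 0)
    (ts : ℝ) (hts : 0 < ts) (M D : Fin N → ℝ)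
    (hS : ∀ j, gridS N ω b ts M D j ≠ 0)
    (d : Fin N → ℝ) (hd : ∀ j, 0 < d j)
    (hinv : IsUnit (1 - gridH N ω b ts M D))
    (i j : Fin N) (hij : i ≠ j) (hbij : b i j = 0)
    (hk : ∃ k, 0 < b k i ∧ 0 < b k j) :
    IsUnit (gridPhi N ω b ts M D d) ∧
      (-(((gridPhi N ω b ts M D d)⁻¹) j i) / ((gridPhi N ω b ts M D d)⁻¹) j j).im = 0 ∧
      (-(((gridPhi N ω b ts M D d)⁻¹) j i) / ((gridPhi N ω b ts M D d)⁻¹) j j).re < 0 :=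
  wiener_coeff_spurious_edge_negative_real_general N ω b hsym hnonneg ts M D hS d hd hinv i j hij
    hbij hk
end

section
/- (Theorem B.1, support of the Wiener filter / moral graph) Suppose i ≠ j, b i j = 0, and there is no node k with b k i > 0 and b k j > 0 (so i is neither a neighbor nor a two-hop neighbor of j in the grid graph). Then (Φ⁻¹) j i = 0, and consequently the Wiener filter coefficient W j i = −(Φ⁻¹) j i / (Φ⁻¹) j j equals 0. -/
open Matrix Complex

/-!
Inverting `Φ = A⁻¹ diag(d) A⁻¹ᴴ` with `A = I − H` gives `Φ⁻¹ = Aᴴ diag(d)⁻¹ A`, so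
`(Φ⁻¹) j i = ∑ₖ conj (A k j) (d k)⁻¹ A k i`. The `k`-th term can only be nonzero if
column `k` of `A` meets both `j` and `i`, i.e. `k` is `j` or a neighbour of `j`, and `k` is
`i` or a neighbour of `i`. When `i` and `j` are distinct, not adjacent and have no common
neighbour, no such `k` exists.
-/

namespace Matrix

variable {n R : Type*} [Fintype n] [DecidableEq n]

theorem inv_mul_diagonal_mul_conjTranspose_inv_inv [CommRing R] [StarRing R]
    {A : Matrix n n R} (hA : IsUnit A) (v : n → R) :
    (A⁻¹ * diagonal v * A⁻¹ᴴ)⁻¹ = Aᴴ * (diagonal v)⁻¹ * A := by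
  have hdet : IsUnit A.det := (isUnit_iff_isUnit_det A).mp hA
  have hdetH : IsUnit Aᴴ.det := by
    rw [det_conjTranspose]
    exact hdet.star
  rw [mul_inv_rev, mul_inv_rev, conjTranspose_nonsing_inv, nonsing_inv_nonsing_inv _ hdetH,
    nonsing_inv_nonsing_inv _ hdet, Matrix.mul_assoc]

theorem conjTranspose_mul_diagonal_mul_apply_eq_zero [Semiring R] [StarRing R]
    {A : Matrix n n R} (v : n → R) {i j : n} (h : ∀ k, A k j = 0 ∨ A k i = 0) :
    (Aᴴ * diagonal v * A) j i = 0 := by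
  rw [mul_apply]
  refine Finset.sum_eq_zero fun k _ => ?_
  rw [mul_diagonal, conjTranspose_apply]
  rcases h k with h | h <;> simp [h]

end Matrix

section Grid

variable {N : ℕ} {ω : ℝ} {b : Fin N → Fin N → ℝ} {ts : ℝ} {M D : Fin N → ℝ}

theorem one_sub_gridH_apply_eq_zero {k i : Fin N} (hki : k ≠ i) (hb : b k i = 0) :
    (1 - gridH N ω b ts M D) k i = 0 := by
  simp [gridH, Matrix.sub_apply, one_apply, hki, hb]

theorem one_sub_gridH_apply_eq_zero_or_of_not_adj_of_no_common_neighbor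
    (hsym : ∀ i j, b i j = b j i) (hnonneg : ∀ i j, 0 ≤ b i j)
    {i j : Fin N} (hij : i ≠ j) (hbij : b i j = 0)
    (hk : ¬ ∃ k, 0 < b k i ∧ 0 < b k j) (k : Fin N) :
    (1 - gridH N ω b ts M D) k j = 0 ∨ (1 - gridH N ω b ts M D) k i = 0 := by
  by_cases hkj : k = j
  · subst hkj
    exact .inr (one_sub_gridH_apply_eq_zero hij.symm ((hsym _ _).trans hbij))
  by_cases hki : k = i
  · subst hki
    exact .inl (one_sub_gridH_apply_eq_zero hij hbij)
  by_cases hbki : b k i = 0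
  · exact .inr (one_sub_gridH_apply_eq_zero hki hbki)
  · have hbkj : b k j = 0 :=
      le_antisymm (not_lt.mp fun h => hk ⟨k, (hnonneg k i).lt_of_ne' hbki, h⟩) (hnonneg k j)
    exact .inl (one_sub_gridH_apply_eq_zero hkj hbkj)

end Grid

theorem wiener_coeff_vanishes_outside_moral_graph_general
    (N : ℕ) (ω : ℝ) (b : Fin N → Fin N → ℝ)
    (hsym : ∀ i j, b i j = b j i) (hnonneg : ∀ i j, 0 ≤ b i j)
    (ts : ℝ) (M D : Fin N → ℝ)
    (d : Fin N → ℝ)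
    (hinv : IsUnit (1 - gridH N ω b ts M D))
    (i j : Fin N) (hij : i ≠ j) (hbij : b i j = 0)
    (hk : ¬ ∃ k, 0 < b k i ∧ 0 < b k j) :
    ((gridPhi N ω b ts M D d)⁻¹) j i = 0 ∧
      -(((gridPhi N ω b ts M D d)⁻¹) j i) / ((gridPhi N ω b ts M D d)⁻¹) j j = 0 := by
  have hzero : ((gridPhi N ω b ts M D d)⁻¹) j i = 0 := by
    rw [gridPhi, inv_mul_diagonal_mul_conjTranspose_inv_inv hinv, inv_diagonal]
    exact conjTranspose_mul_diagonal_mul_apply_eq_zero _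
      (one_sub_gridH_apply_eq_zero_or_of_not_adj_of_no_common_neighbor hsym hnonneg hij hbij hk)
  exact ⟨hzero, by simp [hzero]⟩

/-- **Theorem B.1** (support of the Wiener filter / moral graph): if `i` is neither a
neighbor nor a two-hop neighbor of `j` in the grid graph, then `(Φ⁻¹) j i = 0` and the
Wiener filter coefficient `W j i = −(Φ⁻¹) j i / (Φ⁻¹) j j` equals `0`. -/
theorem wiener_coeff_vanishes_outside_moral_graph
    (N : ℕ) (hN : 1 ≤ N) (ω : ℝ) (b : Fin N → Fin N → ℝ)
    (hsym : ∀ i j, b i j = b j i) (hnonneg : ∀ i j, 0 ≤ b i j)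
    (hhollow : ∀ i, b i i = 0)
    (ts : ℝ) (hts : 0 < ts) (M D : Fin N → ℝ)
    (hS : ∀ j, gridS N ω b ts M D j ≠ 0)
    (d : Fin N → ℝ) (hd : ∀ j, 0 < d j)
    (hinv : IsUnit (1 - gridH N ω b ts M D))
    (i j : Fin N) (hij : i ≠ j) (hbij : b i j = 0)
    (hk : ¬ ∃ k, 0 < b k i ∧ 0 < b k j) :
    ((gridPhi N ω b ts M D d)⁻¹) j i = 0 ∧
      -(((gridPhi N ω b ts M D d)⁻¹) j i) / ((gridPhi N ω b ts M D d)⁻¹) j j = 0 :=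
  wiener_coeff_vanishes_outside_moral_graph_general N ω b hsym hnonneg ts M D d hinv i j hij hbij hk
end

section
/- (Nonnegativity of the power spectral density) Let R : ℤ → ℝ be summable (Σ_{n∈ℤ}|R(n)| < ∞) and positive semidefinite in the sense that for every finitely supported c : ℤ → ℂ, the number Σ_{m,n∈ℤ} c(m)·conj(c(n))·R(m−n) is a nonnegative real. Then the spectral density φ(ω) = Σ_{n∈ℤ} R(n)·e^{−iωn} satisfies Re(φ(ω)) ≥ 0 and Im(φ(ω)) = 0 for every real ω, i.e. φ(ω) is a nonnegative real number at all frequencies. -/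
open Finset Filter Topology ComplexOrder

/-!
Testing positive semidefiniteness against `c(n) = e^{-iωn}` on `0 ≤ n < N` gives the quadratic
form `Σ_{|k|<N} (N - |k|) R(k) e^{-iωk}`, which is `N` times the Fejér (Cesàro) mean
`Σ_k (1 - |k|/N)₊ R(k) e^{-iωk}` of the series for `φ(ω)`. These means are therefore nonnegative
in the partial order of `ℂ`, and by dominated convergence (with dominating function `|R|`) they
converge to `φ(ω)`; the set of nonnegative complex numbers is closed.
-/

lemma Int.card_filter_Ico_sub_eq (N : ℕ) (b : ℤ) :
    #{p ∈ Ico (0 : ℤ) N ×ˢ Ico (0 : ℤ) N | p.1 - p.2 = b} = N - b.natAbs := by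
  have hfiber : {p ∈ Ico (0 : ℤ) N ×ˢ Ico (0 : ℤ) N | p.1 - p.2 = b}
      = (Ico (max 0 b) (min (N : ℤ) (N + b))).image fun m => (m, m - b) := by
    ext ⟨m, n⟩
    simp only [mem_filter, mem_product, mem_Ico, mem_image, Prod.mk.injEq, lt_min_iff, max_le_iff]
    constructor
    · rintro ⟨⟨⟨hm0, hmN⟩, hn0, hnN⟩, rfl⟩
      exact ⟨m, ⟨⟨hm0, by omega⟩, hmN, by omega⟩, rfl, by omega⟩
    · rintro ⟨a, ⟨⟨ha0, hab⟩, haN, haNb⟩, rfl, rfl⟩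
      omega
  rw [hfiber, card_image_of_injective _ fun a a' h => (Prod.mk.inj h).1, Int.card_Ico]
  omega

lemma sum_Ico_sum_Ico_sub {M : Type*} [AddCommMonoid M] (N : ℕ) (f : ℤ → M) :
    ∑ m ∈ Ico (0 : ℤ) N, ∑ n ∈ Ico (0 : ℤ) N, f (m - n)
      = ∑ b ∈ Ioo (-(N : ℤ)) N, (N - b.natAbs) • f b := by
  classical
  rw [← sum_product', sum_comp f fun p : ℤ × ℤ => p.1 - p.2]
  have hdiff : (Ico (0 : ℤ) N ×ˢ Ico (0 : ℤ) N).image (fun p : ℤ × ℤ => p.1 - p.2)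
      ⊆ Ioo (-(N : ℤ)) N := by
    simp only [subset_iff, mem_image, mem_product, mem_Ico, mem_Ioo]
    rintro _ ⟨⟨m, n⟩, ⟨⟨hm0, hmN⟩, hn0, hnN⟩, rfl⟩
    omega
  refine sum_subset hdiff (fun b hb hb' => ?_) |>.trans (sum_congr rfl fun b _ => ?_)
  · have hempty : {p ∈ Ico (0 : ℤ) N ×ˢ Ico (0 : ℤ) N | p.1 - p.2 = b} = ∅ :=
      filter_eq_empty_iff.mpr fun p hp hpb => hb' (mem_image.mpr ⟨p, hp, hpb⟩)
    rw [hempty, card_empty, zero_smul]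
  · rw [Int.card_filter_Ico_sub_eq]

noncomputable def fejerWeight (N : ℕ) (k : ℤ) : ℝ := ((N - k.natAbs : ℕ) : ℝ) / N

lemma fejerWeight_nonneg (N : ℕ) (k : ℤ) : 0 ≤ fejerWeight N k := by
  unfold fejerWeight; positivity

lemma fejerWeight_le_one (N : ℕ) (k : ℤ) : fejerWeight N k ≤ 1 :=
  div_le_one_of_le₀ (mod_cast N.sub_le _) N.cast_nonneg

lemma tendsto_fejerWeight_atTop (k : ℤ) : Tendsto (fejerWeight · k) atTop (𝓝 1) := by
  have hlim : Tendsto (fun N : ℕ => 1 - (k.natAbs : ℝ) / N) atTop (𝓝 1) := by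
    simpa using (tendsto_const_div_atTop_nhds_zero_nat (k.natAbs : ℝ)).const_sub 1
  refine hlim.congr' ?_
  filter_upwards [eventually_ge_atTop (max 1 k.natAbs)] with N hN
  have hN0 : (N : ℝ) ≠ 0 := Nat.cast_ne_zero.mpr (by omega)
  rw [fejerWeight, Nat.cast_sub (le_of_max_le_right hN), sub_div, div_self hN0]

section

variable {E : Type*} [NormedAddCommGroup E] [NormedSpace ℝ E]

lemma tsum_fejerWeight_smul (N : ℕ) (f : ℤ → E) :
    ∑' k, fejerWeight N k • f k = (N : ℝ)⁻¹ • ∑ b ∈ Ioo (-(N : ℤ)) N, (N - b.natAbs) • f b := by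
  have hvanish : ∀ b ∉ Ioo (-(N : ℤ)) N, fejerWeight N b • f b = 0 := by
    intro b hb
    have : N - b.natAbs = 0 := by rw [mem_Ioo] at hb; omega
    simp [fejerWeight, this]
  rw [tsum_eq_sum hvanish, smul_sum]
  refine sum_congr rfl fun b _ => ?_
  rw [fejerWeight, div_eq_inv_mul, mul_smul, Nat.cast_smul_eq_nsmul]

lemma tendsto_tsum_fejerWeight_smul [CompleteSpace E] {f : ℤ → E} (hf : Summable (‖f ·‖)) :
    Tendsto (fun N => ∑' k, fejerWeight N k • f k) atTop (𝓝 (∑' k, f k)) := by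
  refine tendsto_tsum_of_dominated_convergence hf
    (fun k => by simpa using (tendsto_fejerWeight_atTop k).smul_const (f k))
    (Eventually.of_forall fun N k => ?_)
  rw [norm_smul, Real.norm_of_nonneg (fejerWeight_nonneg N k)]
  exact mul_le_of_le_one_left (norm_nonneg _) (fejerWeight_le_one N k)

end

lemma Finsupp.sum_support_sum_support_eq_of_subset {ι R : Type*} [CommSemiring R] [StarRing R]
    {c : ι →₀ R} {s : Finset ι} (hc : c.support ⊆ s) (K : ι → ι → R) :
    ∑ m ∈ c.support, ∑ n ∈ c.support, c m * starRingEnd R (c n) * K m n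
      = ∑ m ∈ s, ∑ n ∈ s, c m * starRingEnd R (c n) * K m n := by
  refine sum_subset hc (fun m _ hm => ?_) |>.trans (Finset.sum_congr rfl fun m _ => ?_)
  · simp [Finsupp.notMem_support_iff.mp hm]
  · exact sum_subset hc fun n _ hn => by simp [Finsupp.notMem_support_iff.mp hn]

noncomputable def expTestVector (ω : ℝ) (N : ℕ) : ℤ →₀ ℂ :=
  Finsupp.indicator (Ico 0 N) fun n _ => Complex.exp (-(Complex.I * ω * n))

lemma exp_neg_mul_conj_exp_neg (ω : ℝ) (m n : ℤ) :
    Complex.exp (-(Complex.I * ω * m)) * starRingEnd ℂ (Complex.exp (-(Complex.I * ω * n)))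
      = Complex.exp (-(Complex.I * ω * ↑(m - n))) := by
  rw [← Complex.exp_conj, ← Complex.exp_add]
  congr 1
  simp only [map_neg, map_mul, Complex.conj_I, Complex.conj_ofReal, map_intCast]
  push_cast
  ring

lemma sum_support_expTestVector (R : ℤ → ℝ) (ω : ℝ) (N : ℕ) :
    ∑ m ∈ (expTestVector ω N).support, ∑ n ∈ (expTestVector ω N).support,
        expTestVector ω N m * starRingEnd ℂ (expTestVector ω N n) * ((R (m - n) : ℝ) : ℂ)
      = ∑ m ∈ Ico (0 : ℤ) N, ∑ n ∈ Ico (0 : ℤ) N,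
          (R (m - n) : ℂ) * Complex.exp (-(Complex.I * ω * ↑(m - n))) := by
  classical
  have hsupp : (expTestVector ω N).support ⊆ Ico 0 N := Finsupp.support_indicator_subset _ _
  rw [Finsupp.sum_support_sum_support_eq_of_subset hsupp]
  refine sum_congr rfl fun m hm => sum_congr rfl fun n hn => ?_
  rw [expTestVector, Finsupp.indicator_apply, Finsupp.indicator_apply, dif_pos hm, dif_pos hn,
    exp_neg_mul_conj_exp_neg, mul_comm]

/-- **Nonnegativity of the power spectral density**: if `R : ℤ → ℝ` is absolutely
summable and positive semidefinite (for every finitely supported `c : ℤ → ℂ`, the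
quadratic form `Σ_{m,n} c(m) conj(c(n)) R(m−n)` is a nonnegative real), then the spectral
density `φ(ω) = Σ_{n ∈ ℤ} R(n) e^{−iωn}` is a nonnegative real number at all
frequencies. -/
theorem spectral_density_nonneg
    (R : ℤ → ℝ) (hsum : Summable fun n : ℤ => |R n|)
    (hpsd : ∀ c : ℤ →₀ ℂ,
      (∑ m ∈ c.support, ∑ n ∈ c.support,
          c m * (starRingEnd ℂ) (c n) * ((R (m - n) : ℝ) : ℂ)).im = 0 ∧
      0 ≤ (∑ m ∈ c.support, ∑ n ∈ c.support,
          c m * (starRingEnd ℂ) (c n) * ((R (m - n) : ℝ) : ℂ)).re) :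
    ∀ ω : ℝ,
      0 ≤ (∑' n : ℤ, ((R n : ℝ) : ℂ) * Complex.exp (-(Complex.I * ω * n))).re ∧
      (∑' n : ℤ, ((R n : ℝ) : ℂ) * Complex.exp (-(Complex.I * ω * n))).im = 0 := by
  intro ω
  set f : ℤ → ℂ := fun n => (R n : ℂ) * Complex.exp (-(Complex.I * ω * n))
  have hf : Summable (‖f ·‖) := by simpa [f, Complex.norm_exp] using hsum
  have hcesaro_nonneg (N : ℕ) : 0 ≤ ∑' k, fejerWeight N k • f k := by
    rw [tsum_fejerWeight_smul, ← sum_Ico_sum_Ico_sub, ← sum_support_expTestVector]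
    obtain ⟨him, hre⟩ := hpsd (expTestVector ω N)
    exact smul_nonneg (by positivity) (Complex.nonneg_iff.mpr ⟨hre, him.symm⟩)
  obtain ⟨hre, him⟩ := Complex.nonneg_iff.mp <|
    ge_of_tendsto' (tendsto_tsum_fejerWeight_smul hf) hcesaro_nonneg
  exact ⟨hre, him.symm⟩
end
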